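/- arXiv:2201.08530 — 2 statements merged into one kernel-verified Lean document; each statement's English description precedes it below -/
import Mathlib

section
/- Let W1, W2 be symmetric positive definite N×N matrices, S = W1^{1/2}(W1^{-1/2} W2 W1^{-1/2})^{1/2} W1^{1/2}, and F = S^{1/2} log(S^{-1/2} W1 S^{-1/2}) S^{1/2} the logarithmic map of W1 at S. If ψ is a common eigenvector of W1 and W2 with eigenvalues λ1 and λ2 respectively, then ψ is an eigenvector of F with eigenvalue (1/2)√(λ1 λ2)(log λ1 − log λ2). -/
/-! Every matrix in the construction of `F` is built from `W1` and `W2` by products, inverses and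
the spectral calculus, and each of these operations keeps a common eigenvector `ψ` an eigenvector,
with the eigenvalue transformed by the same scalar operation. Tracking eigenvalues, `ψ` is an
eigenvector of `W1^{-1/2} W2 W1^{-1/2}` for `λ2/λ1`, of `S` for `σ = √(λ1 λ2)`, and of
`S^{-1/2} W1 S^{-1/2}` for `λ1/σ`, hence of `F` for `σ log (λ1/σ) = ½ σ (log λ1 - log λ2)`. -/

open Matrix

noncomputable def msqrt {N : ℕ} (A : Matrix (Fin N) (Fin N) ℝ) : Matrix (Fin N) (Fin N) ℝ :=
  cfc Real.sqrt A

noncomputable def mlog {N : ℕ} (A : Matrix (Fin N) (Fin N) ℝ) : Matrix (Fin N) (Fin N) ℝ :=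
  cfc Real.log A

noncomputable def mexp {N : ℕ} (A : Matrix (Fin N) (Fin N) ℝ) : Matrix (Fin N) (Fin N) ℝ :=
  cfc Real.exp A

noncomputable def mpow {N : ℕ} (p : ℝ) (A : Matrix (Fin N) (Fin N) ℝ) : Matrix (Fin N) (Fin N) ℝ :=
  cfc (fun x : ℝ => x ^ p) A

/-- Midpoint of the affine-invariant geodesic between `W1` and `W2`:
`S = W1^{1/2} (W1^{-1/2} W2 W1^{-1/2})^{1/2} W1^{1/2}`. -/
noncomputable def geoMid {N : ℕ} (W1 W2 : Matrix (Fin N) (Fin N) ℝ) : Matrix (Fin N) (Fin N) ℝ :=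
  msqrt W1 * msqrt ((msqrt W1)⁻¹ * W2 * (msqrt W1)⁻¹) * msqrt W1

/-- Logarithmic map at `S`: `Log_S(W) = S^{1/2} log(S^{-1/2} W S^{-1/2}) S^{1/2}`. -/
noncomputable def logMap {N : ℕ} (S W : Matrix (Fin N) (Fin N) ℝ) : Matrix (Fin N) (Fin N) ℝ :=
  msqrt S * mlog ((msqrt S)⁻¹ * W * (msqrt S)⁻¹) * msqrt S

/-- Exponential map at `S`: `Exp_S(D) = S^{1/2} exp(S^{-1/2} D S^{-1/2}) S^{1/2}`. -/
noncomputable def expMap {N : ℕ} (S D : Matrix (Fin N) (Fin N) ℝ) : Matrix (Fin N) (Fin N) ℝ :=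
  msqrt S * mexp ((msqrt S)⁻¹ * D * (msqrt S)⁻¹) * msqrt S

namespace Matrix

variable {n : Type*} [Fintype n]

lemma diagonal_comp_mulVec_eq_smul [DecidableEq n] {R : Type*} [CommRing R] [IsDomain R]
    {d v : n → R} {μ : R} (h : diagonal d *ᵥ v = μ • v) (f : R → R) :
    diagonal (f ∘ d) *ᵥ v = f μ • v := by
  funext i
  have hi : d i * v i = μ * v i := by simpa [mulVec_diagonal] using congrFun h i
  rcases eq_or_ne (v i) 0 with h0 | h0
  · simp [mulVec_diagonal, h0]
  · simp [mulVec_diagonal, mul_right_cancel₀ h0 hi]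

lemma IsHermitian.cfc_mulVec_eq_smul [DecidableEq n] {A : Matrix n n ℝ} (hA : A.IsHermitian)
    (f : ℝ → ℝ) {ψ : n → ℝ} {μ : ℝ} (h : A *ᵥ ψ = μ • ψ) : cfc f A *ᵥ ψ = f μ • ψ := by
  set U : Matrix n n ℝ := (hA.eigenvectorUnitary : Matrix n n ℝ)
  have hUU : star U * U = 1 := hA.eigenvectorUnitary.prop.1
  have hUU' : U * star U = 1 := hA.eigenvectorUnitary.prop.2
  have hdiag : diagonal hA.eigenvalues *ᵥ (star U *ᵥ ψ) = μ • (star U *ᵥ ψ) := by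
    have hAU : star U * A = diagonal hA.eigenvalues * star U := by
      conv_lhs => rw [hA.spectral_theorem, Unitary.conjStarAlgAut_apply]
      rw [← mul_assoc, ← mul_assoc, hUU, one_mul]
      rfl
    rw [mulVec_mulVec, ← hAU, ← mulVec_mulVec, h, mulVec_smul]
  rw [hA.cfc_eq, IsHermitian.cfc, Unitary.conjStarAlgAut_apply, ← mulVec_mulVec,
    ← mulVec_mulVec, show RCLike.ofReal ∘ f ∘ hA.eigenvalues = f ∘ hA.eigenvalues from rfl,
    diagonal_comp_mulVec_eq_smul hdiag f, mulVec_smul, mulVec_mulVec, hUU', one_mulVec]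

lemma inv_mulVec_eq_smul [DecidableEq n] {K : Type*} [Field K] {A : Matrix n n K}
    (hA : IsUnit A) {ψ : n → K} {c : K} (h : A *ᵥ ψ = c • ψ) : A⁻¹ *ᵥ ψ = c⁻¹ • ψ := by
  have hψ : ψ = c • (A⁻¹ *ᵥ ψ) := by
    rw [← mulVec_smul, ← h, mulVec_mulVec, nonsing_inv_mul _ ((isUnit_iff_isUnit_det A).1 hA),
      one_mulVec]
  rcases eq_or_ne c 0 with rfl | hc
  · rw [zero_smul] at hψ
    simp [hψ]
  · conv_rhs => rw [hψ, smul_smul, inv_mul_cancel₀ hc, one_smul]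

lemma mul_mul_mulVec_eq_smul {R : Type*} [CommRing R] {A B C : Matrix n n R} {ψ : n → R}
    {a b c : R} (hA : A *ᵥ ψ = a • ψ) (hB : B *ᵥ ψ = b • ψ) (hC : C *ᵥ ψ = c • ψ) :
    (A * B * C) *ᵥ ψ = (a * b * c) • ψ := by
  simp only [← mulVec_mulVec, hA, hB, hC, mulVec_smul, smul_smul]
  congr 1
  ring

lemma PosDef.pos_of_mulVec_eq_smul {A : Matrix n n ℝ} (hA : A.PosDef) {ψ : n → ℝ} {μ : ℝ}
    (h : A *ᵥ ψ = μ • ψ) (hψ : ψ ≠ 0) : 0 < μ := by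
  have hpos := hA.dotProduct_mulVec_pos hψ
  rw [h, dotProduct_smul, smul_eq_mul, mul_comm] at hpos
  exact pos_of_mul_pos_right hpos (dotProduct_star_self_nonneg ψ)

open scoped ComplexOrder in
lemma PosDef.mul_mul_of_isHermitian [DecidableEq n] {𝕜 : Type*} [RCLike 𝕜]
    {A B : Matrix n n 𝕜} (hA : A.PosDef) (hB : B.IsHermitian) (hBu : IsUnit B) :
    (B * A * B).PosDef := by
  simpa only [hB.eq] using hA.conjTranspose_mul_mul_same (mulVec_injective_iff_isUnit.2 hBu)

end Matrix

section SquareRoot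

open MatrixOrder

variable {N : ℕ}

lemma isHermitian_msqrt (A : Matrix (Fin N) (Fin N) ℝ) : (msqrt A).IsHermitian :=
  cfc_predicate _ _

lemma posDef_msqrt {A : Matrix (Fin N) (Fin N) ℝ} (hA : A.PosDef) : (msqrt A).PosDef := by
  rw [← isStrictlyPositive_iff_posDef, _root_.msqrt, cfc_isStrictlyPositive_iff _ _]
  exact fun x hx => Real.sqrt_pos.2 (hA.isStrictlyPositive.spectrum_pos hx)

lemma isHermitian_inv_msqrt_mul_mul (A : Matrix (Fin N) (Fin N) ℝ)
    {B : Matrix (Fin N) (Fin N) ℝ} (hB : B.IsHermitian) :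
    ((msqrt A)⁻¹ * B * (msqrt A)⁻¹).IsHermitian := by
  simpa only [(isHermitian_msqrt A).inv.eq] using
    isHermitian_conjTranspose_mul_mul (msqrt A)⁻¹ hB

lemma posDef_inv_msqrt_mul_mul {A B : Matrix (Fin N) (Fin N) ℝ} (hA : A.PosDef)
    (hB : B.PosDef) : ((msqrt A)⁻¹ * B * (msqrt A)⁻¹).PosDef :=
  hB.mul_mul_of_isHermitian (isHermitian_msqrt A).inv (posDef_msqrt hA).inv.isUnit

lemma inv_msqrt_mul_mul_mulVec_eq_smul {A B : Matrix (Fin N) (Fin N) ℝ} (hA : A.PosDef)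
    {ψ : Fin N → ℝ} {a b : ℝ} (ha : A *ᵥ ψ = a • ψ) (hb : B *ᵥ ψ = b • ψ) (ha₀ : 0 ≤ a) :
    ((msqrt A)⁻¹ * B * (msqrt A)⁻¹) *ᵥ ψ = (b / a) • ψ := by
  have hsqrt : (msqrt A)⁻¹ *ᵥ ψ = (√a)⁻¹ • ψ :=
    inv_mulVec_eq_smul (posDef_msqrt hA).isUnit (hA.1.cfc_mulVec_eq_smul _ ha)
  rw [mul_mul_mulVec_eq_smul hsqrt hb hsqrt]
  congr 1
  rw [mul_right_comm, ← mul_inv, Real.mul_self_sqrt ha₀, div_eq_inv_mul]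

lemma geoMid_mulVec_eq_smul {W1 W2 : Matrix (Fin N) (Fin N) ℝ} (hW1 : W1.PosDef)
    (hW2 : W2.IsHermitian) {ψ : Fin N → ℝ} {l1 l2 : ℝ} (h1 : W1 *ᵥ ψ = l1 • ψ)
    (h2 : W2 *ᵥ ψ = l2 • ψ) (hl1 : 0 ≤ l1) : geoMid W1 W2 *ᵥ ψ = √(l1 * l2) • ψ := by
  have hP : msqrt W1 *ᵥ ψ = √l1 • ψ := hW1.1.cfc_mulVec_eq_smul _ h1
  have hQ : msqrt ((msqrt W1)⁻¹ * W2 * (msqrt W1)⁻¹) *ᵥ ψ = √(l2 / l1) • ψ :=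
    (isHermitian_inv_msqrt_mul_mul W1 hW2).cfc_mulVec_eq_smul _
      (inv_msqrt_mul_mul_mulVec_eq_smul hW1 h1 h2 hl1)
  rw [geoMid, mul_mul_mulVec_eq_smul hP hQ hP]
  congr 1
  rw [Real.sqrt_div' _ hl1, Real.sqrt_mul hl1]
  rcases hl1.eq_or_lt with rfl | hl1
  · simp
  · field_simp

lemma posDef_geoMid {W1 W2 : Matrix (Fin N) (Fin N) ℝ} (hW1 : W1.PosDef)
    (hW2 : W2.PosDef) : (geoMid W1 W2).PosDef :=
  (posDef_msqrt (posDef_inv_msqrt_mul_mul hW1 hW2)).mul_mul_of_isHermitian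
    (isHermitian_msqrt W1) (posDef_msqrt hW1).isUnit

lemma logMap_mulVec_eq_smul {S W : Matrix (Fin N) (Fin N) ℝ} (hS : S.PosDef)
    (hW : W.IsHermitian) {ψ : Fin N → ℝ} {s w : ℝ} (hs : S *ᵥ ψ = s • ψ) (hw : W *ᵥ ψ = w • ψ)
    (hs₀ : 0 ≤ s) : logMap S W *ᵥ ψ = (s * Real.log (w / s)) • ψ := by
  have hR : msqrt S *ᵥ ψ = √s • ψ := hS.1.cfc_mulVec_eq_smul _ hs
  have hL : mlog ((msqrt S)⁻¹ * W * (msqrt S)⁻¹) *ᵥ ψ = Real.log (w / s) • ψ :=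
    (isHermitian_inv_msqrt_mul_mul S hW).cfc_mulVec_eq_smul _
      (inv_msqrt_mul_mul_mulVec_eq_smul hS hs hw hs₀)
  rw [logMap, mul_mul_mulVec_eq_smul hR hL hR, mul_right_comm, Real.mul_self_sqrt hs₀]

end SquareRoot

/-- if ψ is a common eigenvector of SPD matrices W1, W2 with eigenvalues λ1, λ2,
then ψ is an eigenvector of F = Log_S(W1) with eigenvalue (1/2)√(λ1 λ2)(log λ1 − log λ2). -/
theorem stmt_1 {N : ℕ} (W1 W2 : Matrix (Fin N) (Fin N) ℝ)
    (hW1 : W1.PosDef) (hW2 : W2.PosDef)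
    (ψ : Fin N → ℝ) (hψ : ψ ≠ 0) (l1 l2 : ℝ)
    (h1 : W1 *ᵥ ψ = l1 • ψ) (h2 : W2 *ᵥ ψ = l2 • ψ) :
    logMap (geoMid W1 W2) W1 *ᵥ ψ =
      ((1 / 2) * Real.sqrt (l1 * l2) * (Real.log l1 - Real.log l2)) • ψ := by
  have hl1 := hW1.pos_of_mulVec_eq_smul h1 hψ
  have hl2 := hW2.pos_of_mulVec_eq_smul h2 hψ
  have hS := geoMid_mulVec_eq_smul hW1 hW2.1 h1 h2 hl1.le
  rw [logMap_mulVec_eq_smul (posDef_geoMid hW1 hW2) hW1.1 hS h1 (Real.sqrt_nonneg _)]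
  congr 1
  rw [Real.log_div hl1.ne' (Real.sqrt_pos.2 (mul_pos hl1 hl2)).ne',
    Real.log_sqrt (mul_pos hl1 hl2).le, Real.log_mul hl1.ne' hl2.ne']
  ring
end

section
/- Let W1, W2 be symmetric positive definite N×N matrices with ‖W2‖ = 1. Suppose ψ1 is a unit eigenvector of W1 with eigenvalue λ1 > 0 and ψ2 is a unit eigenvector of W2 with eigenvalue λ2 > 0 such that ψ1 = ψ2 + ψε with ‖ψε‖₂ ≤ (√λ2 / (λ̃max √λ1)) ε, where λ̃max = ‖W2 − λ2 I‖. Then ‖(W2 W1^{-1} − (λ2/λ1) I) ψ1‖₂ ≤ (√λ2 / (λ1 √λ1)) ε. -/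
open Matrix

/-- key perturbation estimate: if ψ1 = ψ2 + ψε where ψ1, ψ2 are unit
eigenvectors of W1, W2 with eigenvalues λ1, λ2, the spectral norm of W2 is 1, and the norm
of ψε is at most (√λ2 / (λ̃max √λ1)) ε with λ̃max the spectral norm of W2 − λ2 I, then the
norm of (W2 W1⁻¹ − (λ2/λ1) I) ψ1 is at most (√λ2 / (λ1 √λ1)) ε. -/
theorem stmt_6 {N : ℕ} (W1 W2 : Matrix (Fin N) (Fin N) ℝ)
    (hW1 : W1.PosDef) (hW2 : W2.PosDef)
    (hW2norm : ‖toEuclideanCLM (𝕜 := ℝ) W2‖ = 1)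
    (ψ1 ψ2 ψε : EuclideanSpace ℝ (Fin N)) (hψ1 : ‖ψ1‖ = 1) (hψ2 : ‖ψ2‖ = 1)
    (l1 l2 ε : ℝ) (hl1 : 0 < l1) (hl2 : 0 < l2) (hε : 0 < ε)
    (h1 : toEuclideanCLM (𝕜 := ℝ) W1 ψ1 = l1 • ψ1)
    (h2 : toEuclideanCLM (𝕜 := ℝ) W2 ψ2 = l2 • ψ2)
    (hsum : ψ1 = ψ2 + ψε)
    (hεnorm : ‖ψε‖ ≤ Real.sqrt l2 /
      (‖toEuclideanCLM (𝕜 := ℝ) (W2 - l2 • (1 : Matrix (Fin N) (Fin N) ℝ))‖ * Real.sqrt l1) * ε) :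
    ‖toEuclideanCLM (𝕜 := ℝ) (W2 * W1⁻¹) ψ1 - (l2 / l1) • ψ1‖ ≤
      Real.sqrt l2 / (l1 * Real.sqrt l1) * ε := by
  set M : Matrix (Fin N) (Fin N) ℝ := W2 - l2 • (1 : Matrix (Fin N) (Fin N) ℝ) with hM
  -- W1⁻¹ ψ1 = l1⁻¹ • ψ1
  have hinvmul : W1⁻¹ * W1 = 1 := Matrix.nonsing_inv_mul _ (isUnit_iff_ne_zero.mpr hW1.det_pos.ne')
  have hid : toEuclideanCLM (𝕜 := ℝ) (W1⁻¹ * W1) ψ1 = ψ1 := by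
    rw [hinvmul, _root_.map_one]; rfl
  have hinv : toEuclideanCLM (𝕜 := ℝ) W1⁻¹ ψ1 = l1⁻¹ • ψ1 := by
    have h' : l1 • toEuclideanCLM (𝕜 := ℝ) W1⁻¹ ψ1 = ψ1 := by
      rw [← (toEuclideanCLM (𝕜 := ℝ) W1⁻¹).map_smul, ← h1]
      simpa [ContinuousLinearMap.mul_apply] using hid
    calc toEuclideanCLM (𝕜 := ℝ) W1⁻¹ ψ1
        = l1⁻¹ • (l1 • toEuclideanCLM (𝕜 := ℝ) W1⁻¹ ψ1) := by
          rw [smul_smul, inv_mul_cancel₀ hl1.ne', one_smul]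
      _ = l1⁻¹ • ψ1 := by rw [h']
  -- vector identity
  have hvec : toEuclideanCLM (𝕜 := ℝ) (W2 * W1⁻¹) ψ1 - (l2 / l1) • ψ1
      = l1⁻¹ • (toEuclideanCLM (𝕜 := ℝ) M ψε) := by
    have hMε : toEuclideanCLM (𝕜 := ℝ) M ψε
        = toEuclideanCLM (𝕜 := ℝ) W2 ψ1 - l2 • ψ1 := by
      have hε2 : ψε = ψ1 - ψ2 := by rw [hsum]; abel
      have hTM : toEuclideanCLM (𝕜 := ℝ) M
          = toEuclideanCLM (𝕜 := ℝ) W2 - l2 • 1 := by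
        rw [hM, _root_.map_sub, _root_.map_smul, _root_.map_one]
      rw [hTM, hε2]
      simp only [ContinuousLinearMap.sub_apply, ContinuousLinearMap.smul_apply,
        ContinuousLinearMap.one_apply, ContinuousLinearMap.map_sub, h2]
      module
    rw [_root_.map_mul, ContinuousLinearMap.mul_apply, hinv,
      (toEuclideanCLM (𝕜 := ℝ) W2).map_smul, hMε, smul_sub, smul_smul, div_eq_inv_mul]
  rw [hvec, norm_smul, norm_inv, Real.norm_of_nonneg hl1.le]
  have hbound : ‖toEuclideanCLM (𝕜 := ℝ) M ψε‖ ≤ Real.sqrt l2 / Real.sqrt l1 * ε := by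
    have hle := (toEuclideanCLM (𝕜 := ℝ) M).le_opNorm ψε
    rcases eq_or_lt_of_le (norm_nonneg (toEuclideanCLM (𝕜 := ℝ) M)) with hz | hz
    · have : ‖toEuclideanCLM (𝕜 := ℝ) M ψε‖ ≤ 0 := by
        calc ‖toEuclideanCLM (𝕜 := ℝ) M ψε‖ ≤ ‖toEuclideanCLM (𝕜 := ℝ) M‖ * ‖ψε‖ := hle
          _ = 0 := by rw [← hz, zero_mul]
      have h0 : ‖toEuclideanCLM (𝕜 := ℝ) M ψε‖ = 0 := le_antisymm this (norm_nonneg _)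
      rw [h0]
      positivity
    · calc ‖toEuclideanCLM (𝕜 := ℝ) M ψε‖ ≤ ‖toEuclideanCLM (𝕜 := ℝ) M‖ * ‖ψε‖ := hle
        _ ≤ ‖toEuclideanCLM (𝕜 := ℝ) M‖ *
            (Real.sqrt l2 / (‖toEuclideanCLM (𝕜 := ℝ) M‖ * Real.sqrt l1) * ε) := by
            exact mul_le_mul_of_nonneg_left hεnorm hz.le
        _ = Real.sqrt l2 / Real.sqrt l1 * ε := by
            rw [div_mul_eq_div_div_swap, ← mul_assoc,
              mul_div_cancel₀ _ hz.ne']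
  calc l1⁻¹ * ‖toEuclideanCLM (𝕜 := ℝ) M ψε‖
      ≤ l1⁻¹ * (Real.sqrt l2 / Real.sqrt l1 * ε) := by
        exact mul_le_mul_of_nonneg_left hbound (by positivity)
    _ = Real.sqrt l2 / (l1 * Real.sqrt l1) * ε := by
        rw [div_mul_eq_div_div_swap, ← mul_assoc, inv_mul_eq_div, div_div, mul_comm (Real.sqrt l1) l1]
end
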